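/- arXiv:1104.2217 — 3 statements merged into one kernel-verified Lean document; each statement's English description precedes it below -/
import Mathlib

section
/- The Gale-Shapley algorithm with men proposing terminates after finitely many rounds and produces a stable matching between W and M. -/
namespace GS

/-- The `k` most-preferred elements of `S` according to the rank function `rank`
(lower rank = more preferred); if `S` has at most `k` elements this is all of `S`. -/
def topk {α : Type*} [DecidableEq α] (rank : α → ℕ) (k : ℕ) (S : Finset α) : Finset α :=
  S.filter fun a => (S.filter fun b => rank b < rank a).card < k

/-- An instance of the stable-matching problem with `n` women and `n` men.
`mpref m w` is the rank man `m` assigns to woman `w` (lower = more preferred),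
and `wpref w m` is the rank woman `w` assigns to man `m`. -/
structure Instance (n : ℕ) where
  mpref : Fin n → Fin n → ℕ
  wpref : Fin n → Fin n → ℕ
  mprefInj : ∀ m, Function.Injective (mpref m)
  wprefInj : ∀ w, Function.Injective (wpref w)

variable {n : ℕ}

/-- `prefers p a b` : `a` is strictly preferred to `b` under rank function `p`. -/
def prefers (p : Fin n → ℕ) (a b : Fin n) : Prop := p a < p b

/-- Given the current state `avail m` (the women who have not yet rejected man `m`),
the set of women man `m` proposes to tonight: his most-preferred available woman
(a singleton, or empty if no woman is available). -/
def proposals (I : Instance n) (avail : Fin n → Finset (Fin n)) (m : Fin n) :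
    Finset (Fin n) := topk (I.mpref m) 1 (avail m)

/-- The men proposing to woman `w` tonight. -/
def proposersOf (I : Instance n) (avail : Fin n → Finset (Fin n)) (w : Fin n) :
    Finset (Fin n) := Finset.univ.filter fun m => w ∈ proposals I avail m

/-- The men rejected by woman `w` tonight: all of tonight's proposers except
her most-preferred one. -/
def rejectedBy (I : Instance n) (avail : Fin n → Finset (Fin n)) (w : Fin n) :
    Finset (Fin n) := proposersOf I avail w \ topk (I.wpref w) 1 (proposersOf I avail w)

/-- One night of the men-proposing Gale-Shapley algorithm. -/
def step (I : Instance n) (avail : Fin n → Finset (Fin n)) :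
    Fin n → Finset (Fin n) :=
  fun m => (avail m).filter fun w => m ∉ rejectedBy I avail w

/-- `nights I t m` : the set of women who have not rejected man `m` before night `t`
(initially all women). -/
def nights (I : Instance n) (t : ℕ) : Fin n → Finset (Fin n) :=
  (step I)^[t] (fun _ => Finset.univ)

/-- The algorithm has terminated by night `T`: no man is rejected on night `T`. -/
def Stopped (I : Instance n) (T : ℕ) : Prop := step I (nights I T) = nights I T

/-- On night `T`, each man `m` serenades exactly under the window of `μ m`. -/
def MatchesAt (I : Instance n) (T : ℕ) (μ : Fin n ≃ Fin n) : Prop :=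
  ∀ m, proposals I (nights I T) m = {μ m}

/-- The bijection `μ` (from men to women) is the outcome of the men-proposing
Gale-Shapley algorithm on instance `I`: for some night `T` no rejection occurs and
every man `m` is matched with `μ m`. -/
def IsGSMatching (I : Instance n) (μ : Fin n ≃ Fin n) : Prop :=
  ∃ T, Stopped I T ∧ MatchesAt I T μ

/-- Stability of a matching `μ` (men to women): there is no unmatched pair `(w, m)`
each of whom strictly prefers the other to their partner under `μ`. -/
def Stable (I : Instance n) (μ : Fin n ≃ Fin n) : Prop :=
  ¬ ∃ m w, μ m ≠ w ∧ I.mpref m w < I.mpref m (μ m) ∧ I.wpref w m < I.wpref w (μ.symm w)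

/-- The instance in which the women in `L` replace their true preferences by the
false preference rankings `f`, everyone else being truthful. -/
def liarInstance (I : Instance n) (L : Finset (Fin n))
    (f : Fin n → Fin n → ℕ) (hf : ∀ w, Function.Injective (f w)) : Instance n where
  mpref := I.mpref
  wpref := fun w => if w ∈ L then f w else I.wpref w
  mprefInj := I.mprefInj
  wprefInj := fun w => by split_ifs; exacts [hf w, I.wprefInj w]

end GS

/-! Men only ever lose options, so the vector of option sets strictly decreases until no
rejection occurs, and a finite poset admits no infinite descending chain. A woman's current
best suitor never gets worse: her favourite proposer is never rejected and keeps proposing to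
her. Hence a woman who once rejected `m` is courted forever after by someone she prefers to
`m`; this rules out both a man running out of options (pigeonhole) and a blocking pair. -/

namespace GS

section TopOne

variable {α : Type*} [DecidableEq α] {rank : α → ℕ} {S : Finset α} {a b : α}

theorem mem_topk_one : a ∈ topk rank 1 S ↔ a ∈ S ∧ ∀ b ∈ S, rank a ≤ rank b := by
  simp only [topk, Finset.mem_filter, Nat.lt_one_iff, Finset.card_eq_zero,
    Finset.filter_eq_empty_iff, not_lt]

theorem topk_one_nonempty (hS : S.Nonempty) : (topk rank 1 S).Nonempty := by
  obtain ⟨a, ha, hmin⟩ := S.exists_min_image rank hS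
  exact ⟨a, mem_topk_one.2 ⟨ha, hmin⟩⟩

theorem eq_of_mem_topk_one (hinj : Function.Injective rank)
    (ha : a ∈ topk rank 1 S) (hb : b ∈ topk rank 1 S) : a = b :=
  hinj <| le_antisymm ((mem_topk_one.1 ha).2 b (mem_topk_one.1 hb).1)
    ((mem_topk_one.1 hb).2 a (mem_topk_one.1 ha).1)

end TopOne

variable {n : ℕ} (I : Instance n) {avail : Fin n → Finset (Fin n)} {m m' w w' : Fin n}

theorem mem_proposals :
    w ∈ proposals I avail m ↔ w ∈ avail m ∧ ∀ w' ∈ avail m, I.mpref m w ≤ I.mpref m w' :=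
  mem_topk_one

theorem eq_of_mem_proposals (h : w ∈ proposals I avail m) (h' : w' ∈ proposals I avail m) :
    w = w' :=
  eq_of_mem_topk_one (I.mprefInj m) h h'

theorem mem_proposersOf : m ∈ proposersOf I avail w ↔ w ∈ proposals I avail m := by
  simp [proposersOf]

theorem mem_step : w ∈ step I avail m ↔ w ∈ avail m ∧ m ∉ rejectedBy I avail w :=
  Finset.mem_filter

theorem step_le (avail : Fin n → Finset (Fin n)) : step I avail ≤ avail :=
  fun _ => Finset.filter_subset _ _

theorem mem_proposals_step (hw : w ∈ proposals I avail m) (hm : m ∉ rejectedBy I avail w) :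
    w ∈ proposals I (step I avail) m := by
  rw [mem_proposals] at hw ⊢
  exact ⟨(mem_step I).2 ⟨hw.1, hm⟩, fun w' hw' => hw.2 w' (step_le I avail m hw')⟩

/-- Her favourite proposer is not rejected, so he proposes to her again the next night. -/
theorem exists_mem_proposals_step_le (h : w ∈ proposals I avail m) :
    ∃ m', w ∈ proposals I (step I avail) m' ∧ I.wpref w m' ≤ I.wpref w m := by
  obtain ⟨m', hbest⟩ :=
    topk_one_nonempty (rank := I.wpref w) ⟨m, (mem_proposersOf I).2 h⟩
  have hm' := mem_topk_one.1 hbest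
  exact ⟨m', mem_proposals_step I ((mem_proposersOf I).1 hm'.1)
    (fun hrej => (Finset.mem_sdiff.1 hrej).2 hbest), hm'.2 m ((mem_proposersOf I).2 h)⟩

theorem exists_mem_proposals_step_lt (h : m ∈ rejectedBy I avail w) :
    ∃ m', w ∈ proposals I (step I avail) m' ∧ I.wpref w m' < I.wpref w m := by
  have hm := (mem_proposersOf I).1 (Finset.mem_sdiff.1 h).1
  obtain ⟨m', hm', hle⟩ := exists_mem_proposals_step_le I hm
  have hne : m' ≠ m := by
    rintro rfl
    exact ((mem_step I).1 ((mem_proposals I).1 hm').1).2 h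
  exact ⟨m', hm', lt_of_le_of_ne hle fun heq => hne (I.wprefInj w heq)⟩

theorem nights_succ (t : ℕ) : nights I (t + 1) = step I (nights I t) :=
  Function.iterate_succ_apply' _ _ _

theorem exists_mem_proposals_nights_le {s t : ℕ} (hst : s ≤ t)
    (h : w ∈ proposals I (nights I s) m) :
    ∃ m', w ∈ proposals I (nights I t) m' ∧ I.wpref w m' ≤ I.wpref w m := by
  induction t, hst using Nat.le_induction with
  | base => exact ⟨m, h, le_rfl⟩
  | succ t _ ih =>
    obtain ⟨m₁, h₁, hle₁⟩ := ih
    obtain ⟨m₂, h₂, hle₂⟩ := exists_mem_proposals_step_le I h₁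
    exact ⟨m₂, nights_succ I t ▸ h₂, hle₂.trans hle₁⟩

theorem exists_mem_rejectedBy_of_notMem_nights {t : ℕ} (h : w ∉ nights I t m) :
    ∃ s < t, m ∈ rejectedBy I (nights I s) w := by
  induction t with
  | zero => exact absurd (Finset.mem_univ w) h
  | succ t ih =>
    by_cases hw : w ∈ nights I t m
    · refine ⟨t, t.lt_succ_self, ?_⟩
      by_contra hrej
      exact h (nights_succ I t ▸ (mem_step I).2 ⟨hw, hrej⟩)
    · obtain ⟨s, hst, hrej⟩ := ih hw
      exact ⟨s, hst.trans t.lt_succ_self, hrej⟩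

theorem exists_preferred_proposer_of_notMem_nights {t : ℕ} (h : w ∉ nights I t m) :
    ∃ m', w ∈ proposals I (nights I t) m' ∧ I.wpref w m' < I.wpref w m := by
  obtain ⟨s, hst, hrej⟩ := exists_mem_rejectedBy_of_notMem_nights I h
  obtain ⟨m₁, h₁, hlt⟩ := exists_mem_proposals_step_lt I hrej
  obtain ⟨m', h', hle⟩ :=
    exists_mem_proposals_nights_le I hst (nights_succ I s ▸ h₁)
  exact ⟨m', h', hle.trans_lt hlt⟩

/-- If `m` had no options left, every woman would have a proposer; as each man proposes at
most once, the `n` women would use up all `n` men, `m` included. -/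
theorem nights_nonempty (t : ℕ) (m : Fin n) : (nights I t m).Nonempty := by
  by_contra hempty
  rw [Finset.not_nonempty_iff_eq_empty] at hempty
  have hcourted : ∀ w, ∃ m', w ∈ proposals I (nights I t) m' := fun w =>
    (exists_preferred_proposer_of_notMem_nights I (m := m) (by simp [hempty])).imp
      fun _ => And.left
  choose suitor hsuitor using hcourted
  have hinj : Function.Injective suitor := fun w w' h =>
    eq_of_mem_proposals I (hsuitor w) (h ▸ hsuitor w')
  obtain ⟨w, rfl⟩ := hinj.bijective_of_finite.2 m
  simpa [hempty] using ((mem_proposals I).1 (hsuitor w)).1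

theorem exists_proposals_nights_eq_singleton (t : ℕ) (m : Fin n) :
    ∃ w, proposals I (nights I t) m = {w} := by
  obtain ⟨w, hw⟩ := topk_one_nonempty (rank := I.mpref m) (nights_nonempty I t m)
  exact ⟨w, Finset.eq_singleton_iff_unique_mem.2
    ⟨hw, fun w' hw' => eq_of_mem_proposals I hw' hw⟩⟩

theorem exists_stopped : ∃ T, Stopped I T := by
  by_contra hnever
  have hdesc : StrictAnti (nights I) := strictAnti_nat_of_succ_lt fun t =>
    (nights_succ I t).symm ▸ lt_of_le_of_ne (step_le I _) fun h => hnever ⟨t, h⟩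
  exact not_injective_infinite_finite _ hdesc.injective

theorem Stopped.rejectedBy_eq_empty {T : ℕ} (hT : Stopped I T) (w : Fin n) :
    rejectedBy I (nights I T) w = ∅ := by
  refine Finset.eq_empty_of_forall_notMem fun x hx => ?_
  have hw : w ∈ nights I T x :=
    ((mem_proposals I).1 ((mem_proposersOf I).1 (Finset.mem_sdiff.1 hx).1)).1
  exact ((mem_step I).1 (hT.symm ▸ hw)).2 hx

theorem Stopped.eq_of_mem_proposals {T : ℕ} (hT : Stopped I T)
    (h : w ∈ proposals I (nights I T) m) (h' : w ∈ proposals I (nights I T) m') : m = m' := by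
  have hall := Finset.sdiff_eq_empty_iff_subset.1 (hT.rejectedBy_eq_empty I w)
  exact eq_of_mem_topk_one (I.wprefInj w)
    (hall ((mem_proposersOf I).2 h)) (hall ((mem_proposersOf I).2 h'))

theorem exists_isGSMatching : ∃ μ, IsGSMatching I μ := by
  obtain ⟨T, hT⟩ := exists_stopped I
  choose partner hpartner using exists_proposals_nights_eq_singleton I T
  have hinj : Function.Injective partner := fun m m' h =>
    hT.eq_of_mem_proposals I (w := partner m') (by simp [hpartner, h]) (by simp [hpartner])
  exact ⟨Equiv.ofBijective partner hinj.bijective_of_finite, T, hT, hpartner⟩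

theorem MatchesAt.stable {T : ℕ} {μ : Fin n ≃ Fin n} (hμ : MatchesAt I T μ) : Stable I μ := by
  rintro ⟨m, w, -, hm, hw⟩
  have hgone : w ∉ nights I T m := fun hwT =>
    hm.not_ge (((mem_proposals I).1 (hμ m ▸ Finset.mem_singleton_self (μ m))).2 w hwT)
  obtain ⟨m', hm', hlt⟩ := exists_preferred_proposer_of_notMem_nights I hgone
  have hpartner : μ.symm w = m' := by
    rw [Equiv.symm_apply_eq, ← Finset.mem_singleton, ← hμ m']
    exact hm'
  exact (hpartner ▸ hw).not_gt hlt

end GS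

open GS in
/-- The men-proposing Gale-Shapley algorithm terminates after finitely many nights
and produces a stable matching. -/
theorem gale_shapley_terminates_and_is_stable (n : ℕ) (I : GS.Instance n) :
    ∃ μ : Fin n ≃ Fin n, IsGSMatching I μ ∧ Stable I μ := by
  obtain ⟨μ, T, hT, hμ⟩ := exists_isGSMatching I
  exact ⟨μ, ⟨T, hT, hμ⟩, hμ.stable I⟩
end

section
/- In the polygamous Gale-Shapley setting with lying women all of whom are weakly better-off: if no woman in L is (strictly) harmed then all women are weakly better-off and every man has gained only worse matches; i.e., if a man m has not gained only worse matches, a contradiction arises via an infinite strictly-decreasing sequence of rejection nights in the original run. -/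
namespace GS

/-- A polygamous (college-admissions style) instance with `nw` women and `nm` men.
Each person `p` has a quota `q p` of spouses sought, and a strict preference
ranking of the opposite side (`lower rank = more preferred`). -/
structure PolyInstance (nw nm : ℕ) where
  qw : Fin nw → ℕ
  qm : Fin nm → ℕ
  mpref : Fin nm → Fin nw → ℕ
  wpref : Fin nw → Fin nm → ℕ
  mprefInj : ∀ m, Function.Injective (mpref m)
  wprefInj : ∀ w, Function.Injective (wpref w)

variable {nw nm : ℕ}

/-- Given the current state `avail m` (women who have not yet rejected man `m`),
man `m` proposes tonight to his `qm m` most-preferred available women (or to all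
available women if fewer remain). -/
def pproposals (P : PolyInstance nw nm) (avail : Fin nm → Finset (Fin nw))
    (m : Fin nm) : Finset (Fin nw) := topk (P.mpref m) (P.qm m) (avail m)

/-- The men proposing to woman `w` tonight. -/
def pproposersOf (P : PolyInstance nw nm) (avail : Fin nm → Finset (Fin nw))
    (w : Fin nw) : Finset (Fin nm) :=
  Finset.univ.filter fun m => w ∈ pproposals P avail m

/-- The men rejected by woman `w` tonight: all of tonight's proposers except her
`qw w` most-preferred ones. -/
def prejectedBy (P : PolyInstance nw nm) (avail : Fin nm → Finset (Fin nw))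
    (w : Fin nw) : Finset (Fin nm) :=
  pproposersOf P avail w \ topk (P.wpref w) (P.qw w) (pproposersOf P avail w)

/-- One night of the men-proposing polygamous deferred-acceptance algorithm. -/
def pstep (P : PolyInstance nw nm) (avail : Fin nm → Finset (Fin nw)) :
    Fin nm → Finset (Fin nw) :=
  fun m => (avail m).filter fun w => m ∉ prejectedBy P avail w

/-- The state (women who have not yet rejected each man) at the start of night `t`. -/
def pnights (P : PolyInstance nw nm) (t : ℕ) : Fin nm → Finset (Fin nw) :=
  (pstep P)^[t] (fun _ => Finset.univ)

/-- The algorithm has terminated by night `T`: no man is rejected on night `T`. -/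
def PStopped (P : PolyInstance nw nm) (T : ℕ) : Prop :=
  pstep P (pnights P T) = pnights P T

/-- The set of (woman, man) pairs `μ` is exactly the set of couples serenading on
night `T`. -/
def PMatchesAt (P : PolyInstance nw nm) (T : ℕ) (μ : Finset (Fin nw × Fin nm)) :
    Prop := ∀ w m, (w, m) ∈ μ ↔ w ∈ pproposals P (pnights P T) m

/-- `μ` is the outcome of the men-proposing polygamous deferred-acceptance
algorithm on instance `P`. -/
def IsPolyGSMatching (P : PolyInstance nw nm) (μ : Finset (Fin nw × Fin nm)) :
    Prop := ∃ T, PStopped P T ∧ PMatchesAt P T μ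

/-- The set of men matched with woman `w` under the matching `μ`. -/
def matchedMen (μ : Finset (Fin nw × Fin nm)) (w : Fin nw) : Finset (Fin nm) :=
  (μ.filter fun p => p.1 = w).image Prod.snd

/-- The set of women matched with man `m` under the matching `μ`. -/
def matchedWomen (μ : Finset (Fin nw × Fin nm)) (m : Fin nm) : Finset (Fin nw) :=
  (μ.filter fun p => p.2 = m).image Prod.fst

/-- The ranks of the members of `S`, sorted increasingly (i.e. from most preferred
to least preferred). -/
def rankList {α : Type*} [DecidableEq α] (rank : α → ℕ) (S : Finset α) : List ℕ :=
  (S.image rank).sort (· ≤ ·)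

/-- Woman `w` is weakly better-off under the matching `N` than under `O`
(judged by her true ranking `P.wpref w`): for each `i`, she does not prefer her
`i`-th best partner under `O` to her `i`-th best partner under `N`. -/
def WeaklyBetterOff (P : PolyInstance nw nm) (O N : Finset (Fin nw × Fin nm))
    (w : Fin nw) : Prop :=
  ∀ i, (rankList (P.wpref w) (matchedMen N w)).getD i 0
      ≤ (rankList (P.wpref w) (matchedMen O w)).getD i 0

/-- Man `m` has gained only worse matches: he prefers every member of `O(m)` to
every member of `N(m) \ O(m)`. -/
def GainedOnlyWorse (P : PolyInstance nw nm) (O N : Finset (Fin nw × Fin nm))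
    (m : Fin nm) : Prop :=
  ∀ w ∈ matchedWomen O m, ∀ w' ∈ matchedWomen N m, w' ∉ matchedWomen O m →
    P.mpref m w < P.mpref m w'

/-- The instance in which the women in `L` replace their true preference rankings
by the false rankings `f`, everyone else being truthful. -/
def polyLiarInstance (P : PolyInstance nw nm) (L : Finset (Fin nw))
    (f : Fin nw → Fin nm → ℕ) (hf : ∀ w, Function.Injective (f w)) :
    PolyInstance nw nm where
  qw := P.qw
  qm := P.qm
  mpref := P.mpref
  wpref := fun w => if w ∈ L then f w else P.wpref w
  mprefInj := P.mprefInj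
  wprefInj := fun w => by split_ifs; exacts [hf w, P.wprefInj w]

end GS

/-!
The heart of the proof is that no man is ever rejected, in the truthful run, by a woman who is his
partner in `N`. Suppose `w` rejects `m` on night `t` and `(w, m) ∈ N`, with `t` minimal. Then `w`
ends up in `O` with a full quota of men she prefers to `m`, so she is harmed and therefore truthful.
Among the men she held on night `t` there is one, `m'`, outside her `N`-partners; since she truly
prefers him to `m`, stability of `N` means `m'` is filled in `N` with women he prefers to `w`. As
he proposed to `w` on night `t`, one of these women must have rejected him on an earlier night,
contradicting the minimality of `t`.

With this, stability of `O` shows that every man prefers his `O`-partners to his new partners and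
has no more partners in `N` than in `O`; double counting then gives every woman equally many
partners in `N` and `O`, and a woman worse off in some rank would again yield an `N`-partner
rejected in the truthful run.
-/

open Finset

namespace GS

section Topk

variable {α : Type*} [DecidableEq α] {rank : α → ℕ} {k : ℕ} {S S' : Finset α} {a b : α}

lemma topk_subset : topk rank k S ⊆ S := Finset.filter_subset _ _

lemma mem_topk : a ∈ topk rank k S ↔ a ∈ S ∧ #{b ∈ S | rank b < rank a} < k :=
  Finset.mem_filter

lemma mem_topk_of_subset (hS : S' ⊆ S) (ha' : a ∈ S') (ha : a ∈ topk rank k S) :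
    a ∈ topk rank k S' :=
  mem_topk.2 ⟨ha',
    (Finset.card_le_card (Finset.filter_subset_filter _ hS)).trans_lt (mem_topk.1 ha).2⟩

lemma rank_lt_of_le_card_filter {r : ℕ} (hr : k ≤ #{b ∈ S | rank b < r})
    (ha : a ∈ topk rank k S) : rank a < r := by
  by_contra! h
  have hsub : {b ∈ S | rank b < r} ⊆ {b ∈ S | rank b < rank a} :=
    Finset.monotone_filter_right _ fun _ _ hb => hb.trans_le h
  exact (mem_topk.1 ha).2.not_ge (hr.trans (Finset.card_le_card hsub))

lemma rank_lt_of_mem_topk_of_notMem (ha : a ∈ topk rank k S) (hb : b ∈ S)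
    (hnb : b ∉ topk rank k S) : rank a < rank b :=
  rank_lt_of_le_card_filter (not_lt.1 fun h => hnb (mem_topk.2 ⟨hb, h⟩)) ha

lemma card_topk_le (hinj : Function.Injective rank) : #(topk rank k S) ≤ k := by
  by_contra! hk
  obtain ⟨a, ha, hmax⟩ := (topk rank k S).exists_max_image rank
    (Finset.card_pos.1 (Nat.zero_lt_of_lt hk))
  have hsub : (topk rank k S).erase a ⊆ {b ∈ S | rank b < rank a} := fun b hb => by
    obtain ⟨hba, hb⟩ := Finset.mem_erase.1 hb
    exact Finset.mem_filter.2 ⟨topk_subset hb,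
      (hmax b hb).lt_of_ne fun h => hba (hinj h)⟩
  have := Finset.card_le_card hsub
  rw [Finset.card_erase_of_mem ha] at this
  have := (mem_topk.1 ha).2
  omega

lemma le_card_topk_of_notMem (hb : b ∈ S) (hnb : b ∉ topk rank k S) :
    k ≤ #(topk rank k S) := by
  obtain ⟨c, hc, hmin⟩ :=
    (S \ topk rank k S).exists_min_image rank ⟨b, Finset.mem_sdiff.2 ⟨hb, hnb⟩⟩
  obtain ⟨hcS, hcnot⟩ := Finset.mem_sdiff.1 hc
  have hsub : {d ∈ S | rank d < rank c} ⊆ topk rank k S := fun d hd => by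
    obtain ⟨hdS, hdc⟩ := Finset.mem_filter.1 hd
    by_contra hdnot
    exact (hmin d (Finset.mem_sdiff.2 ⟨hdS, hdnot⟩)).not_gt hdc
  exact (not_lt.1 fun h => hcnot (mem_topk.2 ⟨hcS, h⟩)).trans (Finset.card_le_card hsub)

lemma card_topk_of_le_card (hinj : Function.Injective rank) (hk : k ≤ #S) :
    #(topk rank k S) = k := by
  refine (card_topk_le hinj).antisymm ?_
  by_cases hS : S ⊆ topk rank k S
  · exact hk.trans (Finset.card_le_card hS)
  · obtain ⟨b, hb, hnb⟩ := Finset.not_subset.1 hS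
    exact le_card_topk_of_notMem hb hnb

end Topk

section Run

variable {nw nm : ℕ} {P : PolyInstance nw nm} {avail : Fin nm → Finset (Fin nw)}
  {m : Fin nm} {w : Fin nw} {s t T : ℕ}

def pheld (P : PolyInstance nw nm) (avail : Fin nm → Finset (Fin nw)) (w : Fin nw) :
    Finset (Fin nm) :=
  topk (P.wpref w) (P.qw w) (pproposersOf P avail w)

lemma mem_pproposersOf : m ∈ pproposersOf P avail w ↔ w ∈ pproposals P avail m := by
  simp [pproposersOf]

lemma pnights_succ (P : PolyInstance nw nm) (t : ℕ) :
    pnights P (t + 1) = pstep P (pnights P t) :=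
  Function.iterate_succ_apply' _ _ _

lemma mem_pnights_succ :
    w ∈ pnights P (t + 1) m ↔ w ∈ pnights P t m ∧ m ∉ prejectedBy P (pnights P t) w := by
  rw [pnights_succ]
  exact Finset.mem_filter

lemma mem_pnights : w ∈ pnights P t m ↔ ∀ s < t, m ∉ prejectedBy P (pnights P s) w := by
  induction t with
  | zero => simp [pnights]
  | succ t ih => simp only [mem_pnights_succ, ih, Nat.forall_lt_succ_right]

lemma pnights_eq_of_stopped (hT : PStopped P T) (h : T ≤ s) : pnights P s = pnights P T := by
  induction s, h using Nat.le_induction with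
  | base => rfl
  | succ s _ ih => rw [pnights_succ, ih, hT]

lemma notMem_prejectedBy_of_stopped (hT : PStopped P T) :
    m ∉ prejectedBy P (pnights P T) w := fun hm => by
  have hw : w ∈ pnights P (T + 1) m := by
    rw [pnights_eq_of_stopped hT T.le_succ]
    exact topk_subset (mem_pproposersOf.1 (Finset.sdiff_subset hm))
  exact (mem_pnights_succ.1 hw).2 hm

lemma pheld_of_stopped (hT : PStopped P T) :
    pheld P (pnights P T) w = pproposersOf P (pnights P T) w :=
  topk_subset.antisymm fun _ hm => by
    by_contra hnm
    exact notMem_prejectedBy_of_stopped hT (Finset.mem_sdiff.2 ⟨hm, hnm⟩)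

lemma mem_pproposersOf_succ_of_mem_pheld (h : m ∈ pheld P (pnights P t) w) :
    m ∈ pproposersOf P (pnights P (t + 1)) w := by
  have hprop := mem_pproposersOf.1 (topk_subset h)
  have hnr : m ∉ prejectedBy P (pnights P t) w := fun hr => (Finset.mem_sdiff.1 hr).2 h
  have hav : w ∈ pnights P (t + 1) m := mem_pnights_succ.2 ⟨topk_subset hprop, hnr⟩
  exact mem_pproposersOf.2 (mem_topk_of_subset (fun _ hw => (mem_pnights_succ.1 hw).1) hav hprop)

lemma le_card_pproposersOf_of_rejected (hrej : m ∈ prejectedBy P (pnights P t) w)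
    (hts : t ≤ s) :
    P.qw w ≤ #{m' ∈ pproposersOf P (pnights P s) w | P.wpref w m' < P.wpref w m} := by
  induction s, hts using Nat.le_induction with
  | base =>
    obtain ⟨hm, hnm⟩ := Finset.mem_sdiff.1 hrej
    exact not_lt.1 fun h => hnm (mem_topk.2 ⟨hm, h⟩)
  | succ s _ ih =>
    have hheld : #(pheld P (pnights P s) w) = P.qw w :=
      card_topk_of_le_card (P.wprefInj w) (ih.trans (Finset.card_filter_le _ _))
    have hsub : pheld P (pnights P s) w ⊆
        {m' ∈ pproposersOf P (pnights P (s + 1)) w | P.wpref w m' < P.wpref w m} :=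
      fun m' hm' => Finset.mem_filter.2
        ⟨mem_pproposersOf_succ_of_mem_pheld hm', rank_lt_of_le_card_filter ih hm'⟩
    exact hheld.symm.le.trans (Finset.card_le_card hsub)

end Run

section Outcome

variable {nw nm : ℕ} {P : PolyInstance nw nm} {m m' : Fin nm} {w : Fin nw} {t : ℕ}
  {μ : Finset (Fin nw × Fin nm)}

@[simp]
lemma mem_matchedMen : m ∈ matchedMen μ w ↔ (w, m) ∈ μ := by
  simp [matchedMen]

@[simp]
lemma mem_matchedWomen : w ∈ matchedWomen μ m ↔ (w, m) ∈ μ := by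
  simp [matchedWomen]

lemma matchedMen_eq_of_matchesAt {T : ℕ} (hμ : PMatchesAt P T μ) :
    matchedMen μ w = pproposersOf P (pnights P T) w := by
  ext m
  rw [mem_matchedMen, hμ, mem_pproposersOf]

lemma matchedWomen_eq_of_matchesAt {T : ℕ} (hμ : PMatchesAt P T μ) :
    matchedWomen μ m = pproposals P (pnights P T) m := by
  ext w
  rw [mem_matchedWomen, hμ]

namespace IsPolyGSMatching

lemma card_matchedMen_le (hμ : IsPolyGSMatching P μ) : #(matchedMen μ w) ≤ P.qw w := by
  obtain ⟨T, hT, hμ⟩ := hμ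
  rw [matchedMen_eq_of_matchesAt hμ, ← pheld_of_stopped hT]
  exact card_topk_le (P.wprefInj w)

lemma card_matchedWomen_le (hμ : IsPolyGSMatching P μ) : #(matchedWomen μ m) ≤ P.qm m := by
  obtain ⟨T, _, hμ⟩ := hμ
  rw [matchedWomen_eq_of_matchesAt hμ]
  exact card_topk_le (P.mprefInj m)

lemma exists_mem_pproposals (hμ : IsPolyGSMatching P μ) (hwm : (w, m) ∈ μ) :
    ∃ t, w ∈ pproposals P (pnights P t) m := by
  obtain ⟨T, _, hμ⟩ := hμ
  exact ⟨T, (hμ w m).1 hwm⟩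

lemma full_of_rejected (hμ : IsPolyGSMatching P μ)
    (hrej : m ∈ prejectedBy P (pnights P t) w) :
    #(matchedMen μ w) = P.qw w ∧ ∀ m' ∈ matchedMen μ w, P.wpref w m' < P.wpref w m := by
  obtain ⟨T, hT, hμT⟩ := id hμ
  have hsub : {m' ∈ matchedMen μ w | P.wpref w m' < P.wpref w m} ⊆ matchedMen μ w :=
    Finset.filter_subset _ _
  have hle := le_card_pproposersOf_of_rejected hrej (le_max_left t T)
  rw [pnights_eq_of_stopped hT (le_max_right t T), ← matchedMen_eq_of_matchesAt hμT] at hle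
  have heq := Finset.eq_of_subset_of_card_le hsub (hμ.card_matchedMen_le.trans hle)
  refine ⟨le_antisymm hμ.card_matchedMen_le (heq ▸ hle), fun m' hm' => ?_⟩
  rw [← heq] at hm'
  exact (Finset.mem_filter.1 hm').2

lemma full_of_not_rejected (hμ : IsPolyGSMatching P μ)
    (hnr : ∀ t, m ∉ prejectedBy P (pnights P t) w) (hwm : (w, m) ∉ μ) :
    #(matchedWomen μ m) = P.qm m ∧ ∀ w' ∈ matchedWomen μ m, P.mpref m w' < P.mpref m w := by
  obtain ⟨T, _, hμT⟩ := hμ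
  have hav : w ∈ pnights P T m := mem_pnights.2 fun s _ => hnr s
  have hnot : w ∉ pproposals P (pnights P T) m := fun h => hwm ((hμT w m).2 h)
  rw [matchedWomen_eq_of_matchesAt hμT]
  exact ⟨(card_topk_le (P.mprefInj m)).antisymm (le_card_topk_of_notMem hav hnot),
    fun w' hw' => rank_lt_of_mem_topk_of_notMem hw' hav hnot⟩

lemma full_of_lt_partner (hμ : IsPolyGSMatching P μ) (hm' : (w, m') ∈ μ)
    (hlt : P.wpref w m < P.wpref w m') (hwm : (w, m) ∉ μ) :
    #(matchedWomen μ m) = P.qm m ∧ ∀ w' ∈ matchedWomen μ m, P.mpref m w' < P.mpref m w :=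
  hμ.full_of_not_rejected
    (fun _ hrej => lt_asymm hlt ((hμ.full_of_rejected hrej).2 m' (mem_matchedMen.2 hm'))) hwm

lemma full_of_card_lt (hμ : IsPolyGSMatching P μ) (hcard : #(matchedMen μ w) < P.qw w)
    (hwm : (w, m) ∉ μ) :
    #(matchedWomen μ m) = P.qm m ∧ ∀ w' ∈ matchedWomen μ m, P.mpref m w' < P.mpref m w :=
  hμ.full_of_not_rejected (fun _ hrej => hcard.ne (hμ.full_of_rejected hrej).1) hwm

end IsPolyGSMatching

lemma exists_rejected_of_mem_pproposals (hprop : w ∈ pproposals P (pnights P t) m)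
    {A : Finset (Fin nw)} (hA : P.qm m ≤ #A) (hpref : ∀ w' ∈ A, P.mpref m w' < P.mpref m w) :
    ∃ w' ∈ A, ∃ s < t, m ∈ prejectedBy P (pnights P s) w' := by
  by_contra! h
  have hsub : A ⊆ {w' ∈ pnights P t m | P.mpref m w' < P.mpref m w} := fun w' hw' =>
    Finset.mem_filter.2 ⟨mem_pnights.2 (h w' hw'), hpref w' hw'⟩
  exact (mem_topk.1 hprop).2.not_ge (hA.trans (Finset.card_le_card hsub))

lemma exists_preferred_proposer_notMem (hrej : m ∈ prejectedBy P (pnights P t) w)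
    {B : Finset (Fin nm)} (hB : #B ≤ P.qw w) (hmB : m ∈ B) :
    ∃ m' ∉ B, w ∈ pproposals P (pnights P t) m' ∧ P.wpref w m' < P.wpref w m := by
  obtain ⟨hm, hnm⟩ := Finset.mem_sdiff.1 hrej
  have hk : P.qw w ≤ #{m' ∈ pproposersOf P (pnights P t) w | P.wpref w m' < P.wpref w m} :=
    not_lt.1 fun h => hnm (mem_topk.2 ⟨hm, h⟩)
  by_contra! h
  have hsub : {m' ∈ pproposersOf P (pnights P t) w | P.wpref w m' < P.wpref w m} ⊆ B.erase m :=
    fun m' hm' => by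
      obtain ⟨hprop, hlt⟩ := Finset.mem_filter.1 hm'
      refine Finset.mem_erase.2 ⟨ne_of_apply_ne (P.wpref w) hlt.ne, ?_⟩
      by_contra hm'B
      exact (h m' hm'B (mem_pproposersOf.1 hprop)).not_gt hlt
  have := Finset.card_le_card hsub
  rw [Finset.card_erase_of_mem hmB] at this
  have := Finset.card_pos.2 ⟨m, hmB⟩
  omega

end Outcome

section RankList

lemma card_filter_lt_sort_getElem {R : Finset ℕ} {i : ℕ} (hi : i < (R.sort).length) :
    #{x ∈ R | x < (R.sort)[i]} = i := by
  have hsort := R.sortedLT_sort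
  have heq : {x ∈ R | x < (R.sort)[i]} = ((R.sort).take i).toFinset := by
    ext x
    rw [Finset.mem_filter, ← Finset.mem_sort (· ≤ ·), List.mem_toFinset, List.mem_iff_getElem,
      List.mem_take_iff_getElem]
    constructor
    · rintro ⟨⟨j, hj, rfl⟩, hlt⟩
      exact ⟨j, lt_min ((hsort.getElem_lt_getElem_iff).1 hlt) hj, rfl⟩
    · rintro ⟨j, hj, rfl⟩
      exact ⟨⟨j, _, rfl⟩, (hsort.getElem_lt_getElem_iff).2 (lt_min_iff.1 hj).1⟩
  rw [heq, List.toFinset_card_of_nodup ((R.sort_nodup (· ≤ ·)).sublist (List.take_sublist _ _)),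
    List.length_take, min_eq_left hi.le]

variable {α : Type*} [DecidableEq α] {rank : α → ℕ} {So Sn : Finset α}

lemma length_rankList (hinj : Function.Injective rank) (S : Finset α) :
    (rankList rank S).length = #S := by
  rw [rankList, Finset.length_sort, Finset.card_image_of_injective _ hinj]

lemma exists_getD_lt_of_forall_lt (hinj : Function.Injective rank) (hcard : #Sn ≤ #So)
    {b : α} (hb : b ∈ Sn) (hlt : ∀ a ∈ So, rank a < rank b) :
    ∃ i, (rankList rank So).getD i 0 < (rankList rank Sn).getD i 0 := by
  have hbn : rank b ∈ rankList rank Sn := (Finset.mem_sort _).2 (Finset.mem_image_of_mem rank hb)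
  obtain ⟨i, hin, hget⟩ := List.getElem_of_mem hbn
  have hio : i < (rankList rank So).length := by
    rw [length_rankList hinj] at hin ⊢
    omega
  obtain ⟨a, ha, hrank⟩ := Finset.mem_image.1 ((Finset.mem_sort _).1 (List.getElem_mem hio))
  refine ⟨i, ?_⟩
  rw [List.getD_eq_getElem _ _ hio, List.getD_eq_getElem _ _ hin, hget, ← hrank]
  exact hlt a ha

lemma exists_lt_of_getD_lt (hinj : Function.Injective rank) (hcard : #Sn ≤ #So) {i : ℕ}
    (hi : (rankList rank So).getD i 0 < (rankList rank Sn).getD i 0) :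
    ∃ a ∈ So, a ∉ Sn ∧ ∃ b ∈ Sn, rank a < rank b := by
  have hin : i < (rankList rank Sn).length := by
    by_contra! h
    rw [List.getD_eq_default _ _ h] at hi
    exact Nat.not_lt_zero _ hi
  have hio : i < (rankList rank So).length := by
    rw [length_rankList hinj] at hin ⊢
    omega
  rw [List.getD_eq_getElem _ _ hio, List.getD_eq_getElem _ _ hin] at hi
  have hcard_o : #{x ∈ So.image rank | x < (rankList rank So)[i]} = i :=
    card_filter_lt_sort_getElem hio
  have hcard_n : #{x ∈ Sn.image rank | x < (rankList rank Sn)[i]} = i :=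
    card_filter_lt_sort_getElem hin
  obtain ⟨x, hxo, hxn⟩ := Finset.exists_mem_notMem_of_card_lt_card
    (s := {x ∈ Sn.image rank | x < (rankList rank Sn)[i]})
    (t := insert (rankList rank So)[i] {x ∈ So.image rank | x < (rankList rank So)[i]})
    (by rw [Finset.card_insert_of_notMem (by simp)]; omega)
  have hxlt : x < (rankList rank Sn)[i] := by
    rcases Finset.mem_insert.1 hxo with rfl | hx
    exacts [hi, ((Finset.mem_filter.1 hx).2).trans hi]
  have hxSo : x ∈ So.image rank := by
    rcases Finset.mem_insert.1 hxo with rfl | hx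
    exacts [(Finset.mem_sort _).1 (List.getElem_mem hio), (Finset.mem_filter.1 hx).1]
  obtain ⟨a, ha, rfl⟩ := Finset.mem_image.1 hxSo
  obtain ⟨b, hb, hrb⟩ := Finset.mem_image.1 ((Finset.mem_sort _).1 (List.getElem_mem hin))
  exact ⟨a, ha,
    fun haSn => hxn (Finset.mem_filter.2 ⟨Finset.mem_image_of_mem rank haSn, hxlt⟩),
    b, hb, hrb ▸ hxlt⟩

end RankList

section Count

variable {nw nm : ℕ}

lemma sum_card_matchedMen (μ : Finset (Fin nw × Fin nm)) : ∑ w, #(matchedMen μ w) = #μ := by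
  rw [Finset.card_eq_sum_card_fiberwise fun p _ => Finset.mem_univ p.1]
  refine Finset.sum_congr rfl fun w _ => Finset.card_image_of_injOn fun p hp q hq hpq => ?_
  exact Prod.ext ((Finset.mem_filter.1 hp).2.trans (Finset.mem_filter.1 hq).2.symm) hpq

lemma sum_card_matchedWomen (μ : Finset (Fin nw × Fin nm)) :
    ∑ m, #(matchedWomen μ m) = #μ := by
  rw [Finset.card_eq_sum_card_fiberwise fun p _ => Finset.mem_univ p.2]
  refine Finset.sum_congr rfl fun m _ => Finset.card_image_of_injOn fun p hp q hq hpq => ?_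
  exact Prod.ext hpq ((Finset.mem_filter.1 hp).2.trans (Finset.mem_filter.1 hq).2.symm)

end Count

section Liars

variable {nw nm : ℕ} {P : PolyInstance nw nm} {L : Finset (Fin nw)}
  {f : Fin nw → Fin nm → ℕ} {hf : ∀ w, Function.Injective (f w)}
  {O N : Finset (Fin nw × Fin nm)}
  {m m' : Fin nm} {w : Fin nw} {t : ℕ}

lemma polyLiarInstance_wpref_of_notMem (hw : w ∉ L) :
    (polyLiarInstance P L f hf).wpref w = P.wpref w :=
  if_neg hw

lemma exists_rejected_by_partner_before (hN : IsPolyGSMatching (polyLiarInstance P L f hf) N)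
    (hw : w ∉ L) (hm : (w, m) ∈ N) (hlt : P.wpref w m' < P.wpref w m) (hm' : (w, m') ∉ N)
    (hprop : w ∈ pproposals P (pnights P t) m') :
    ∃ w', (w', m') ∈ N ∧ ∃ s < t, m' ∈ prejectedBy P (pnights P s) w' := by
  rw [← polyLiarInstance_wpref_of_notMem (f := f) (hf := hf) hw] at hlt
  obtain ⟨hfull, hpref⟩ := hN.full_of_lt_partner hm hlt hm'
  obtain ⟨w', hw', s, hs, hrej⟩ := exists_rejected_of_mem_pproposals hprop hfull.ge hpref
  exact ⟨w', mem_matchedWomen.1 hw', s, hs, hrej⟩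

theorem notMem_prejectedBy_of_mem (hO : IsPolyGSMatching P O)
    (hN : IsPolyGSMatching (polyLiarInstance P L f hf) N)
    (hliars : ∀ w ∈ L, WeaklyBetterOff P O N w) (t : ℕ) :
    ∀ m w, (w, m) ∈ N → m ∉ prejectedBy P (pnights P t) w := by
  induction t using Nat.strong_induction_on with
  | _ t ih =>
  intro m w hmN hrej
  obtain ⟨hfull, hpref⟩ := hO.full_of_rejected hrej
  have hNw : #(matchedMen N w) ≤ P.qw w := hN.card_matchedMen_le
  have hwL : w ∉ L := fun hw => by
    obtain ⟨i, hi⟩ := exists_getD_lt_of_forall_lt (P.wprefInj w) (hfull ▸ hNw)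
      (mem_matchedMen.2 hmN) hpref
    exact hi.not_ge (hliars w hw i)
  obtain ⟨m', hm'N, hprop, hlt⟩ :=
    exists_preferred_proposer_notMem hrej hNw (mem_matchedMen.2 hmN)
  obtain ⟨w', hw'N, s, hs, hrej'⟩ :=
    exists_rejected_by_partner_before hN hwL hmN hlt (mt mem_matchedMen.2 hm'N) hprop
  exact ih s hs m' w' hw'N hrej'

theorem gainedOnlyWorse (hO : IsPolyGSMatching P O)
    (hN : IsPolyGSMatching (polyLiarInstance P L f hf) N)
    (hliars : ∀ w ∈ L, WeaklyBetterOff P O N w) (m : Fin nm) : GainedOnlyWorse P O N m :=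
  fun w hw w' hw' hw'O => (hO.full_of_not_rejected
    (fun t => notMem_prejectedBy_of_mem hO hN hliars t m w' (mem_matchedWomen.1 hw'))
    (mt mem_matchedWomen.2 hw'O)).2 w hw

lemma card_matchedWomen_le_card_matchedWomen (hO : IsPolyGSMatching P O)
    (hN : IsPolyGSMatching (polyLiarInstance P L f hf) N)
    (hliars : ∀ w ∈ L, WeaklyBetterOff P O N w) (m : Fin nm) :
    #(matchedWomen N m) ≤ #(matchedWomen O m) := by
  by_cases hsub : matchedWomen N m ⊆ matchedWomen O m
  · exact Finset.card_le_card hsub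
  obtain ⟨w, hwN, hwO⟩ := Finset.not_subset.1 hsub
  rw [(hO.full_of_not_rejected
    (fun t => notMem_prejectedBy_of_mem hO hN hliars t m w (mem_matchedWomen.1 hwN))
    (mt mem_matchedWomen.2 hwO)).1]
  exact hN.card_matchedWomen_le

lemma card_matchedMen_le_card_matchedMen (hO : IsPolyGSMatching P O)
    (hN : IsPolyGSMatching (polyLiarInstance P L f hf) N)
    (hliars : ∀ w ∈ L, WeaklyBetterOff P O N w) (w : Fin nw) :
    #(matchedMen O w) ≤ #(matchedMen N w) := by
  by_contra! hlt
  obtain ⟨m, hmO, hmN⟩ := Finset.exists_mem_notMem_of_card_lt_card hlt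
  obtain ⟨hfull, hpref⟩ :=
    hN.full_of_card_lt (hlt.trans_le hO.card_matchedMen_le) (mt mem_matchedMen.2 hmN)
  have hwO : w ∈ matchedWomen O m := mem_matchedWomen.2 (mem_matchedMen.1 hmO)
  obtain ⟨w', hw'N, hw'O⟩ : ∃ w' ∈ matchedWomen N m, w' ∉ matchedWomen O m := by
    by_contra! h
    have heq := Finset.eq_of_subset_of_card_le h (hfull ▸ hO.card_matchedWomen_le)
    exact hmN (mem_matchedMen.2 (mem_matchedWomen.1 (heq ▸ hwO)))
  exact lt_asymm (hpref w' hw'N) (gainedOnlyWorse hO hN hliars m w hwO w' hw'N hw'O)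

lemma card_matchedMen_eq (hO : IsPolyGSMatching P O)
    (hN : IsPolyGSMatching (polyLiarInstance P L f hf) N)
    (hliars : ∀ w ∈ L, WeaklyBetterOff P O N w) (w : Fin nw) :
    #(matchedMen N w) = #(matchedMen O w) := by
  have hle := card_matchedMen_le_card_matchedMen hO hN hliars
  have hsum : ∑ w, #(matchedMen N w) ≤ ∑ w, #(matchedMen O w) := by
    rw [sum_card_matchedMen, sum_card_matchedMen, ← sum_card_matchedWomen,
      ← sum_card_matchedWomen]
    exact Finset.sum_le_sum fun m _ => card_matchedWomen_le_card_matchedWomen hO hN hliars m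
  exact ((Finset.sum_eq_sum_iff_of_le fun w _ => hle w).1
    ((Finset.sum_le_sum fun w _ => hle w).antisymm hsum) w (Finset.mem_univ w)).symm

theorem weaklyBetterOff (hO : IsPolyGSMatching P O)
    (hN : IsPolyGSMatching (polyLiarInstance P L f hf) N)
    (hliars : ∀ w ∈ L, WeaklyBetterOff P O N w) (w : Fin nw) : WeaklyBetterOff P O N w := by
  by_cases hwL : w ∈ L
  · exact hliars w hwL
  intro i
  by_contra! hi
  obtain ⟨m', hm'O, hm'N, m, hmN, hlt⟩ :=
    exists_lt_of_getD_lt (P.wprefInj w) (card_matchedMen_eq hO hN hliars w).le hi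
  obtain ⟨t, hprop⟩ := hO.exists_mem_pproposals (mem_matchedMen.1 hm'O)
  obtain ⟨w', hw'N, s, -, hrej⟩ := exists_rejected_by_partner_before hN hwL
    (mem_matchedMen.1 hmN) hlt (mt mem_matchedMen.2 hm'N) hprop
  exact notMem_prejectedBy_of_mem hO hN hliars s m' w' hw'N hrej

end Liars

end GS

open GS in
theorem poly_sisterhood_general (nw nm : ℕ)
    (P : GS.PolyInstance nw nm)
    (L : Finset (Fin nw)) (f : Fin nw → Fin nm → ℕ)
    (hf : ∀ w, Function.Injective (f w))
    (O N : Finset (Fin nw × Fin nm))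
    (hO : IsPolyGSMatching P O)
    (hN : IsPolyGSMatching (polyLiarInstance P L f hf) N)
    (hliars : ∀ w ∈ L, WeaklyBetterOff P O N w) :
    (∀ w, WeaklyBetterOff P O N w) ∧ (∀ m, GainedOnlyWorse P O N m) :=
  ⟨weaklyBetterOff hO hN hliars, gainedOnlyWorse hO hN hliars⟩

open GS in
/-- The polygamous theorem: if all lying women are weakly better-off, then all
women are weakly better-off and every man has gained only worse matches. -/
theorem poly_sisterhood (nw nm : ℕ)
    (P : GS.PolyInstance nw nm) (hq : ∑ w, P.qw w = ∑ m, P.qm m)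
    (L : Finset (Fin nw)) (f : Fin nw → Fin nm → ℕ)
    (hf : ∀ w, Function.Injective (f w))
    (O N : Finset (Fin nw × Fin nm))
    (hO : IsPolyGSMatching P O)
    (hN : IsPolyGSMatching (polyLiarInstance P L f hf) N)
    (hliars : ∀ w ∈ L, WeaklyBetterOff P O N w) :
    (∀ w, WeaklyBetterOff P O N w) ∧ (∀ m, GainedOnlyWorse P O N m) :=
  poly_sisterhood_general nw nm P L f hf O N hO hN hliars
end

section
/- In the monogamous Gale-Shapley setting with exactly one lying woman, if the lying woman is strictly better-off and no woman is worse-off, then some innocent (truthful) woman is also strictly better-off. -/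
namespace GS

variable {n : ℕ} {p : Fin n → ℕ} {a b : Fin n}

theorem prefers.ne (h : prefers p a b) : a ≠ b := by
  rintro rfl
  exact lt_irrefl _ h

theorem prefers_of_ne_of_not_prefers (hp : Function.Injective p) (hab : a ≠ b)
    (h : ¬ prefers p b a) : prefers p a b :=
  lt_of_le_of_ne (not_lt.mp h) (hp.ne hab)

end GS

open GS in
theorem lone_liar_helps_some_innocent_general (n : ℕ) (I : GS.Instance n)
    (l : Fin n)
    (O N : Fin n ≃ Fin n)
    (hl : prefers (I.wpref l) (N.symm l) (O.symm l))
    (hnoworse : ∀ w, ¬ prefers (I.wpref w) (O.symm w) (N.symm w)) :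
    ∃ w, w ≠ l ∧ prefers (I.wpref w) (N.symm w) (O.symm w) := by
  -- `O m` is the woman left by `l`'s new partner `m`.
  set m := N.symm l
  have hml : O m ≠ l := fun h => hl.ne (O.eq_symm_apply.mpr h)
  have hmoved : N.symm (O m) ≠ O.symm (O m) := by
    rw [O.symm_apply_apply]
    exact fun h => hml (N.symm.injective h)
  exact ⟨O m, hml, prefers_of_ne_of_not_prefers (I.wprefInj _) hmoved (hnoworse _)⟩

open GS in
/-- With exactly one lying woman: if the liar is strictly better-off and no woman is
worse-off, then some innocent (truthful) woman is also strictly better-off. -/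
theorem lone_liar_helps_some_innocent (n : ℕ) (I : GS.Instance n)
    (l : Fin n) (f : Fin n → Fin n → ℕ) (hf : ∀ w, Function.Injective (f w))
    (O N : Fin n ≃ Fin n)
    (hO : IsGSMatching I O) (hN : IsGSMatching (liarInstance I {l} f hf) N)
    (hl : prefers (I.wpref l) (N.symm l) (O.symm l))
    (hnoworse : ∀ w, ¬ prefers (I.wpref w) (O.symm w) (N.symm w)) :
    ∃ w, w ≠ l ∧ prefers (I.wpref w) (N.symm w) (O.symm w) :=
  lone_liar_helps_some_innocent_general n I l O N hl hnoworse
end
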